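/- Define w_n := 2^n for integers n ≤ 0 and w_n := 1/(n+1) for integers n > 0, let W be the bounded invertible weighted bilateral shift on H₀ := ℓ²(ℤ,ℂ) with (Wf)(n) = (w_n/w_{n−1})·f(n−1), and let Ŵ := W ⊕ (W*)⁻¹ on H₀ ⊕₂ H₀, which is J-unitary for J(x,y) = (y,x). Set L := {0} ⊕ H₀, so L⊥ = H₀ ⊕ {0}. Then: (a) Ŵ(L⊥) = L⊥, the spectrum of the operator induced by Ŵ on L⊥ is contained in { z : 1 ≤ |z| ≤ 2 } and its spectral radius equals 2, and nevertheless L⊥ equals the closure of S₀(Ŵ) and also equals the closure of S(Ŵ); (b) Ŵ(L) = L, the spectrum of the operator induced by Ŵ on L is contained in { z : |z| ≤ 1 }, and yet L ∩ closure(S(Ŵ)) = {0}. -/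

import Mathlib

noncomputable section
open Real ContinuousLinearMap Filter
open scoped ENNReal

/-- The Hilbert space `ℓ²(ℤ, ℂ)` of square-summable two-sided complex sequences. -/
abbrev l2 : Type := lp (fun _ : ℤ => ℂ) 2

/-- The Hilbert direct sum `ℓ²(ℤ,ℂ) ⊕₂ ℓ²(ℤ,ℂ)`. -/
abbrev Hl : Type := WithLp 2 (l2 × l2)

/-- The continuous linear equivalence between `Hl` and `l2 × l2`. -/
def e : Hl ≃L[ℂ] l2 × l2 := WithLp.prodContinuousLinearEquiv 2 ℂ l2 l2

/-- The direct sum `A ⊕ B` of two bounded operators acting on `Hl`. -/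
def hatOp (A B : l2 →L[ℂ] l2) : Hl →L[ℂ] Hl :=
  ((e.symm : l2 × l2 →L[ℂ] Hl).comp (A.prodMap B)).comp (e : Hl →L[ℂ] l2 × l2)

/-- The operator `J : (x, y) ↦ (y, x)` on `Hl`. -/
def Jop : Hl →L[ℂ] Hl :=
  ((e.symm : l2 × l2 →L[ℂ] Hl).comp
    ((ContinuousLinearMap.snd ℂ l2 l2).prod (ContinuousLinearMap.fst ℂ l2 l2))).comp
    (e : Hl →L[ℂ] l2 × l2)

/-- The embedding of `l2` onto the first component `H₀ ⊕ {0}` of `Hl`. -/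
def incl₁ : l2 →L[ℂ] Hl :=
  (e.symm : l2 × l2 →L[ℂ] Hl).comp (ContinuousLinearMap.inl ℂ l2 l2)

/-- The embedding of `l2` onto the second component `{0} ⊕ H₀` of `Hl`. -/
def incl₂ : l2 →L[ℂ] Hl :=
  (e.symm : l2 × l2 →L[ℂ] Hl).comp (ContinuousLinearMap.inr ℂ l2 l2)

/-- The restriction of a continuous linear map to an invariant submodule. -/
def restrictOp {H : Type*} [NormedAddCommGroup H] [InnerProductSpace ℂ H]
    (T : H →L[ℂ] H) (L : Submodule ℂ H) (hL : ∀ x ∈ L, T x ∈ L) : L →L[ℂ] L :=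
  { toLinearMap := (T : H →ₗ[ℂ] H).restrict hL
    cont := Continuous.subtype_mk (T.continuous.comp continuous_subtype_val) _ }

/-- The set `S₀(T)` of vectors whose orbit under `T` tends to `0` in norm. -/
def S0 (T : Hl →L[ℂ] Hl) : Set Hl :=
  {x | Tendsto (fun N : ℕ => ‖(T ^ N) x‖) atTop (nhds 0)}

/-- The set `S(T)` of vectors with bounded orbit under `T`. -/
def Sbd (T : Hl →L[ℂ] Hl) : Set Hl :=
  {x | ∃ C : ℝ, 0 ≤ C ∧ ∀ N : ℕ, ‖(T ^ N) x‖ ≤ C}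

set_option maxHeartbeats 2000000
set_option synthInstance.maxHeartbeats 400000

open scoped ENNReal NNReal Topology ComplexConjugate

section Aux

open Real ContinuousLinearMap Filter
open scoped ENNReal NNReal Topology ComplexConjugate

/-! ### Arithmetic facts about the weights -/

variable {w : ℤ → ℝ}

lemma ar_pos (hw : ∀ n : ℤ, (n ≤ 0 → w n = (2 : ℝ) ^ n) ∧ (0 < n → w n = ((n : ℝ) + 1)⁻¹))
    (n : ℤ) : 0 < w n := by
  rcases le_or_gt n 0 with h | h
  · rw [(hw n).1 h]; positivity
  · rw [(hw n).2 h]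
    have : (1:ℝ) ≤ (n:ℝ) := by exact_mod_cast h
    positivity

lemma ar_up (hw : ∀ n : ℤ, (n ≤ 0 → w n = (2 : ℝ) ^ n) ∧ (0 < n → w n = ((n : ℝ) + 1)⁻¹))
    (N : ℕ) (n : ℤ) : w n / w (n - N) ≤ 2 ^ N := by
  have h2 : (0:ℝ) < 2 := two_pos
  rcases le_or_gt n 0 with hn | hn
  · have hm : n - N ≤ 0 := by omega
    rw [(hw n).1 hn, (hw _).1 hm]
    rw [div_le_iff₀ (by positivity)]
    rw [← zpow_natCast (2:ℝ) N, ← zpow_add₀ (two_ne_zero)]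
    apply le_of_eq
    congr 1
    omega
  · rcases le_or_gt (n - N) 0 with hm | hm
    · rw [(hw n).2 hn, (hw _).1 hm]
      have h1 : ((n:ℝ) + 1)⁻¹ ≤ 1 := by
        rw [inv_le_one_iff₀]; right
        have : (1:ℝ) ≤ (n:ℝ) := by exact_mod_cast hn
        linarith
      have h2' : ((2:ℝ) ^ (n - N : ℤ))⁻¹ ≤ 2 ^ N := by
        rw [← zpow_neg, ← zpow_natCast (2:ℝ) N]
        apply zpow_le_zpow_right₀ one_le_two
        omega
      calc ((n:ℝ)+1)⁻¹ / 2 ^ (n - N : ℤ) = ((n:ℝ)+1)⁻¹ * ((2:ℝ) ^ (n-N:ℤ))⁻¹ := by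
            rw [div_eq_mul_inv]
        _ ≤ 1 * 2 ^ N := by
            apply mul_le_mul h1 h2' (by positivity) one_pos.le
        _ = 2 ^ N := one_mul _
    · rw [(hw n).2 hn, (hw _).2 hm]
      have hn1 : (1:ℝ) ≤ (n:ℝ) := by exact_mod_cast hn
      have hm1 : (1:ℝ) ≤ ((n - N : ℤ):ℝ) := by exact_mod_cast hm
      push_cast at hm1 ⊢
      calc ((n:ℝ)+1)⁻¹ / ((n:ℝ) - N + 1)⁻¹ = ((n:ℝ) - N + 1) / ((n:ℝ)+1) := by
            field_simp
        _ ≤ 1 := by rw [div_le_one (by linarith)]; have : (0:ℝ) ≤ N := Nat.cast_nonneg N; linarith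
        _ ≤ 2 ^ N := one_le_pow₀ one_le_two

lemma ar_down (hw : ∀ n : ℤ, (n ≤ 0 → w n = (2 : ℝ) ^ n) ∧ (0 < n → w n = ((n : ℝ) + 1)⁻¹))
    (N : ℕ) (n : ℤ) : w n / w (n + N) ≤ N + 1 := by
  have hN0 : (0:ℝ) ≤ N := Nat.cast_nonneg N
  rcases le_or_gt (n + N) 0 with hm | hm
  · have hn : n ≤ 0 := by omega
    rw [(hw n).1 hn, (hw _).1 hm]
    have : (2:ℝ) ^ n / 2 ^ (n + N : ℤ) = 2 ^ (-(N:ℤ)) := by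
      rw [← zpow_sub₀ two_ne_zero]; congr 1; omega
    rw [this]
    have : (2:ℝ) ^ (-(N:ℤ)) ≤ 2 ^ (0:ℤ) := zpow_le_zpow_right₀ one_le_two (by omega)
    simpa using this.trans (by linarith)
  · rcases le_or_gt n 0 with hn | hn
    · rw [(hw n).1 hn, (hw _).2 hm]
      have h1 : (2:ℝ) ^ n ≤ 1 := by
        have : (2:ℝ) ^ n ≤ 2 ^ (0:ℤ) := zpow_le_zpow_right₀ one_le_two hn
        simpa using this
      have hpos : (0:ℝ) < ((n + N : ℤ):ℝ) + 1 := by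
        have : (1:ℝ) ≤ ((n+N:ℤ):ℝ) := by exact_mod_cast hm
        linarith
      calc (2:ℝ) ^ n / (((n + N : ℤ):ℝ) + 1)⁻¹ = 2 ^ n * (((n + N:ℤ):ℝ) + 1) := by
            rw [div_eq_mul_inv, inv_inv]
        _ ≤ 1 * ((N:ℝ) + 1) := by
            apply mul_le_mul h1 ?_ (by linarith) one_pos.le
            push_cast
            have : (n:ℝ) ≤ 0 := by exact_mod_cast hn
            linarith
        _ = (N:ℝ) + 1 := one_mul _
    · rw [(hw n).2 hn, (hw _).2 (by omega)]
      have hn1 : (1:ℝ) ≤ (n:ℝ) := by exact_mod_cast hn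
      push_cast
      rw [div_eq_mul_inv, inv_inv, inv_mul_le_iff₀ (by linarith)]
      nlinarith

/-! ### `ℓ²` facts -/

lemma l2_norm_le (g f : l2) (C : ℝ) (hC : 0 ≤ C) (k : ℤ)
    (h : ∀ n : ℤ, ‖g n‖ ≤ C * ‖f (n - k)‖) : ‖g‖ ≤ C * ‖f‖ := by
  have hp : 0 < (2 : ℝ≥0∞).toReal := by norm_num
  have hg := lp.hasSum_norm hp g
  have hf := lp.hasSum_norm hp f
  have hf' : HasSum (fun n : ℤ => ‖f (n - k)‖ ^ (2:ℝ≥0∞).toReal) (‖f‖ ^ (2:ℝ≥0∞).toReal) :=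
    (Equiv.subRight k).hasSum_iff.mpr hf
  have hle : ‖g‖ ^ (2:ℝ≥0∞).toReal ≤ (C ^ (2:ℝ≥0∞).toReal) * ‖f‖ ^ (2:ℝ≥0∞).toReal := by
    refine hasSum_le (fun n => ?_) hg (hf'.mul_left _)
    calc ‖g n‖ ^ (2:ℝ≥0∞).toReal ≤ (C * ‖f (n - k)‖) ^ (2:ℝ≥0∞).toReal :=
          Real.rpow_le_rpow (norm_nonneg _) (h n) (by norm_num)
      _ = C ^ (2:ℝ≥0∞).toReal * ‖f (n - k)‖ ^ (2:ℝ≥0∞).toReal :=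
          Real.mul_rpow hC (norm_nonneg _)
  rw [← Real.mul_rpow hC (norm_nonneg _)] at hle
  have h2 : (0:ℝ) ≤ C * ‖f‖ := mul_nonneg hC (norm_nonneg _)
  by_contra hcon
  push_neg at hcon
  exact absurd hle (not_le.mpr (Real.rpow_lt_rpow h2 hcon hp))

lemma l2_single_norm (k : ℤ) (c : ℂ) : ‖(lp.single 2 k c : l2)‖ = ‖c‖ :=
  lp.norm_single (E := fun _ : ℤ => ℂ) (by norm_num : (0:ℝ≥0∞) < 2) k c

lemma l2_single_apply (k n : ℤ) (c : ℂ) :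
    (lp.single 2 k c : l2) n = if n = k then c else 0 := by
  rw [lp.single_apply, Pi.single_apply]

lemma coord_eq {f g : l2} (h : f = g) (n : ℤ) : f n = g n := by rw [h]

instance : Nontrivial l2 := by
  refine ⟨⟨0, lp.single 2 0 1, fun h => ?_⟩⟩
  have := congrFun (congrArg (fun (f : l2) => (f : ∀ _ : ℤ, ℂ)) h) 0
  simp only [lp.single_apply_self] at this
  rw [lp.coeFn_zero] at this
  simp at this

/-! ### coordinates of powers of weighted shifts -/

lemma shift_pow_minus {T : l2 →L[ℂ] l2} (hwne : ∀ n, w n ≠ 0)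
    (hT : ∀ (f : l2) (n : ℤ), T f n = ((w n / w (n - 1) : ℝ) : ℂ) * f (n - 1)) :
    ∀ (N : ℕ) (f : l2) (n : ℤ),
      (T ^ N) f n = ((w n / w (n - N) : ℝ) : ℂ) * f (n - N) := by
  intro N
  induction N with
  | zero =>
    intro f n
    simp only [pow_zero, one_apply, Nat.cast_zero, sub_zero]
    rw [div_self (hwne n)]
    simp
  | succ N ih =>
    intro f n
    rw [pow_succ, ContinuousLinearMap.mul_apply, ih, hT]
    have hidx : n - (N:ℤ) - 1 = n - ((N + 1 : ℕ) : ℤ) := by push_cast; ring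
    rw [hidx, ← mul_assoc, ← Complex.ofReal_mul, div_mul_div_comm,
      mul_comm (w n) (w (n - (N:ℤ))), mul_div_mul_left _ _ (hwne _)]

lemma shift_pow_plus {T : l2 →L[ℂ] l2} (hwne : ∀ n, w n ≠ 0)
    (hT : ∀ (f : l2) (n : ℤ), T f n = ((w n / w (n + 1) : ℝ) : ℂ) * f (n + 1)) :
    ∀ (N : ℕ) (f : l2) (n : ℤ),
      (T ^ N) f n = ((w n / w (n + N) : ℝ) : ℂ) * f (n + N) := by
  intro N
  induction N with
  | zero =>
    intro f n
    simp only [pow_zero, one_apply, Nat.cast_zero, add_zero]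
    rw [div_self (hwne n)]
    simp
  | succ N ih =>
    intro f n
    rw [pow_succ, ContinuousLinearMap.mul_apply, ih, hT]
    have hidx : n + (N:ℤ) + 1 = n + ((N + 1 : ℕ) : ℤ) := by push_cast; ring
    rw [hidx, ← mul_assoc, ← Complex.ofReal_mul, div_mul_div_comm,
      mul_comm (w n) (w (n + (N:ℤ))), mul_div_mul_left _ _ (hwne _)]

lemma pow_single_plus {T : l2 →L[ℂ] l2} (hwne : ∀ n, w n ≠ 0)
    (hT : ∀ (f : l2) (n : ℤ), T f n = ((w n / w (n + 1) : ℝ) : ℂ) * f (n + 1))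
    (N : ℕ) (k : ℤ) (c : ℂ) :
    (T ^ N) (lp.single 2 k c) = lp.single 2 (k - N) (((w (k - N) / w k : ℝ) : ℂ) * c) := by
  apply lp.ext
  funext n
  rw [shift_pow_plus hwne hT, l2_single_apply, l2_single_apply]
  by_cases h : n = k - (N:ℤ)
  · rw [if_pos (by omega), if_pos h, h]
    norm_num
  · rw [if_neg (by omega), if_neg h, mul_zero]

lemma pow_single_minus {T : l2 →L[ℂ] l2} (hwne : ∀ n, w n ≠ 0)
    (hT : ∀ (f : l2) (n : ℤ), T f n = ((w n / w (n - 1) : ℝ) : ℂ) * f (n - 1))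
    (N : ℕ) (k : ℤ) (c : ℂ) :
    (T ^ N) (lp.single 2 k c) = lp.single 2 (k + N) (((w (k + N) / w k : ℝ) : ℂ) * c) := by
  apply lp.ext
  funext n
  rw [shift_pow_minus hwne hT, l2_single_apply, l2_single_apply]
  by_cases h : n = k + (N:ℤ)
  · rw [if_pos (by omega), if_pos h, h]
    norm_num
  · rw [if_neg (by omega), if_neg h, mul_zero]

/-! ### spectral radius tools -/

lemma tendsto_bound : Tendsto (fun N : ℕ => ((N : ℝ≥0∞) + 1) ^ (1 / (N : ℝ))) atTop (𝓝 1) := by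
  have h1 : Tendsto (fun x : ℝ => x ^ ((1:ℝ) / (1 * x + -1))) atTop (𝓝 1) :=
    tendsto_rpow_div_mul_add 1 1 (-1) (by norm_num)
  have h2 : Tendsto (fun N : ℕ => ((N : ℝ) + 1)) atTop atTop :=
    tendsto_atTop_add_const_right _ 1 tendsto_natCast_atTop_atTop
  have h3 : Tendsto (fun N : ℕ => ((N : ℝ) + 1) ^ ((1:ℝ) / (N : ℝ))) atTop (𝓝 1) := by
    have := h1.comp h2
    refine this.congr (fun N => ?_)
    simp only [Function.comp_apply]
    congr 1
    ring
  have h4 := ENNReal.tendsto_ofReal h3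
  rw [ENNReal.ofReal_one] at h4
  refine h4.congr (fun N => ?_)
  rw [← ENNReal.ofReal_rpow_of_pos (by positivity)]
  congr 1
  rw [ENNReal.ofReal_add (by positivity) (by norm_num)]
  simp

lemma sr_le_one {A : Type*} [NormedRing A] [NormedAlgebra ℂ A] [CompleteSpace A]
    (a : A) (h : ∀ N : ℕ, ‖a ^ N‖ ≤ (N : ℝ) + 1) : spectralRadius ℂ a ≤ 1 := by
  have hgel := spectrum.pow_nnnorm_pow_one_div_tendsto_nhds_spectralRadius a
  refine le_of_tendsto_of_tendsto' hgel tendsto_bound (fun N => ?_)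
  apply ENNReal.rpow_le_rpow ?_ (by positivity)
  have : (‖a ^ N‖₊ : ℝ) ≤ (N : ℝ) + 1 := h N
  have h' : ‖a ^ N‖₊ ≤ ((N : ℝ≥0) + 1) := by exact_mod_cast this
  calc (‖a ^ N‖₊ : ℝ≥0∞) ≤ (((N:ℝ≥0) + 1 : ℝ≥0) : ℝ≥0∞) := by exact_mod_cast h'
    _ = (N : ℝ≥0∞) + 1 := by push_cast; rfl

lemma sr_eq_two {A : Type*} [NormedRing A] [NormedAlgebra ℂ A] [CompleteSpace A] [NormOneClass A]
    (a : A) (hub : ‖a‖ ≤ 2) (hlb : ∀ N : ℕ, (2:ℝ) ^ N ≤ ‖a ^ N‖) :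
    spectralRadius ℂ a = (2 : ℝ≥0∞) := by
  refine le_antisymm ?_ ?_
  · calc spectralRadius ℂ a ≤ ‖a‖₊ := spectrum.spectralRadius_le_nnnorm a
      _ ≤ 2 := by
        have : ‖a‖₊ ≤ (2 : ℝ≥0) := by
          have := hub; exact_mod_cast this
        exact_mod_cast this
  · have hgel := spectrum.pow_nnnorm_pow_one_div_tendsto_nhds_spectralRadius a
    refine ge_of_tendsto hgel ?_
    filter_upwards [eventually_ge_atTop 1] with N hN
    have h1 : ((2:ℝ≥0∞) ^ N) ≤ (‖a ^ N‖₊ : ℝ≥0∞) := by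
      have : (2:ℝ≥0)^N ≤ ‖a ^ N‖₊ := by
        have := hlb N; exact_mod_cast this
      exact_mod_cast this
    calc (2:ℝ≥0∞) = ((2:ℝ≥0∞) ^ N) ^ (1 / (N:ℝ)) := by
          rw [← ENNReal.rpow_natCast 2 N, ← ENNReal.rpow_mul]
          rw [mul_one_div, div_self (Nat.cast_ne_zero.mpr (by omega) : (N:ℝ) ≠ 0)]
          exact (ENNReal.rpow_one 2).symm
      _ ≤ (‖a ^ N‖₊ : ℝ≥0∞) ^ (1 / (N:ℝ)) := ENNReal.rpow_le_rpow h1 (by positivity)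

/-! ### structure of `Hl` -/

lemma hat_fst (A B : l2 →L[ℂ] l2) (x : Hl) : (hatOp A B x).fst = A x.fst := rfl
lemma hat_snd (A B : l2 →L[ℂ] l2) (x : Hl) : (hatOp A B x).snd = B x.snd := rfl
lemma Jop_fst (x : Hl) : (Jop x).fst = x.snd := rfl
lemma Jop_snd (x : Hl) : (Jop x).snd = x.fst := rfl
lemma incl₁_fst (a : l2) : (incl₁ a).fst = a := rfl
lemma incl₁_snd (a : l2) : (incl₁ a).snd = 0 := rfl
lemma incl₂_fst (a : l2) : (incl₂ a).fst = 0 := rfl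
lemma incl₂_snd (a : l2) : (incl₂ a).snd = a := rfl
lemma Hl_ext {x y : Hl} (h1 : x.fst = y.fst) (h2 : x.snd = y.snd) : x = y := WithLp.ofLp_injective 2 (Prod.ext h1 h2)

lemma Hl_inner (x y : Hl) : (inner ℂ x y : ℂ) = inner ℂ x.fst y.fst + inner ℂ x.snd y.snd :=
  WithLp.prod_inner_apply x y

lemma Hl_norm_sq (x : Hl) : ‖x‖ ^ 2 = ‖x.fst‖ ^ 2 + ‖x.snd‖ ^ 2 :=
  WithLp.prod_norm_sq_eq_of_L2 x

lemma hat_pow (A B : l2 →L[ℂ] l2) (N : ℕ) : (hatOp A B) ^ N = hatOp (A ^ N) (B ^ N) := by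
  induction N with
  | zero => ext x <;> rfl
  | succ N ih =>
    rw [pow_succ, pow_succ, pow_succ, ih]
    ext x <;> rfl

lemma hat_adjoint (A B : l2 →L[ℂ] l2) :
    hatOp (adjoint A) (adjoint B) = adjoint (hatOp A B) := by
  rw [eq_adjoint_iff]
  intro x y
  rw [Hl_inner, Hl_inner, hat_fst, hat_snd, hat_fst, hat_snd,
    adjoint_inner_left, adjoint_inner_left]

lemma hat_norm_sq (A B : l2 →L[ℂ] l2) (x : Hl) :
    ‖hatOp A B x‖ ^ 2 = ‖A x.fst‖ ^ 2 + ‖B x.snd‖ ^ 2 := by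
  rw [Hl_norm_sq, hat_fst, hat_snd]

lemma real_eq_of_sq {a b : ℝ} (ha : 0 ≤ a) (hb : 0 ≤ b) (h : a ^ 2 = b ^ 2) : a = b := by
  calc a = Real.sqrt (a ^ 2) := (Real.sqrt_sq ha).symm
    _ = Real.sqrt (b ^ 2) := by rw [h]
    _ = b := Real.sqrt_sq hb

lemma hat_norm_incl₁ (A B : l2 →L[ℂ] l2) (u : l2) : ‖hatOp A B (incl₁ u)‖ = ‖A u‖ := by
  apply real_eq_of_sq (norm_nonneg _) (norm_nonneg _)
  rw [hat_norm_sq, incl₁_fst, incl₁_snd, map_zero, norm_zero]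
  ring

/-- conjugation by a continuous linear equivalence, as an algebra equivalence -/
def conjAlg {H₁ H₂ : Type*} [NormedAddCommGroup H₁] [NormedSpace ℂ H₁]
    [NormedAddCommGroup H₂] [NormedSpace ℂ H₂] (φ : H₁ ≃L[ℂ] H₂) :
    (H₁ →L[ℂ] H₁) ≃ₐ[ℂ] (H₂ →L[ℂ] H₂) where
  toFun T := ((φ : H₁ →L[ℂ] H₂).comp T).comp (φ.symm : H₂ →L[ℂ] H₁)
  invFun T := ((φ.symm : H₂ →L[ℂ] H₁).comp T).comp (φ : H₁ →L[ℂ] H₂)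
  left_inv T := by ext x; simp
  right_inv T := by ext x; simp
  map_mul' S T := by ext x; simp [ContinuousLinearMap.mul_apply]
  map_add' S T := by ext x; simp
  commutes' c := by
    ext x
    simp [Algebra.algebraMap_eq_smul_one]

lemma conjAlg_spectrum {H₁ H₂ : Type*} [NormedAddCommGroup H₁] [NormedSpace ℂ H₁]
    [NormedAddCommGroup H₂] [NormedSpace ℂ H₂] (φ : H₁ ≃L[ℂ] H₂) (T : H₁ →L[ℂ] H₁) :
    spectrum ℂ (conjAlg φ T) = spectrum ℂ T :=
  AlgEquiv.spectrum_eq (conjAlg φ) T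

lemma conjAlg_spectralRadius {H₁ H₂ : Type*} [NormedAddCommGroup H₁] [NormedSpace ℂ H₁]
    [NormedAddCommGroup H₂] [NormedSpace ℂ H₂] (φ : H₁ ≃L[ℂ] H₂) (T : H₁ →L[ℂ] H₁) :
    spectralRadius ℂ (conjAlg φ T) = spectralRadius ℂ T := by
  unfold spectralRadius
  rw [conjAlg_spectrum]

lemma mem_M_iff (x : Hl) : x ∈ Submodule.map (incl₁ : l2 →ₗ[ℂ] Hl) (⊤ : Submodule ℂ l2) ↔ x.snd = 0 := by
  constructor
  · rintro ⟨a, -, rfl⟩; rfl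
  · intro h; exact ⟨x.fst, trivial, Hl_ext rfl h.symm⟩

lemma mem_L_iff (x : Hl) : x ∈ Submodule.map (incl₂ : l2 →ₗ[ℂ] Hl) (⊤ : Submodule ℂ l2) ↔ x.fst = 0 := by
  constructor
  · rintro ⟨a, -, rfl⟩; rfl
  · intro h; exact ⟨x.snd, trivial, Hl_ext h.symm rfl⟩

/-- `l2` is equivalent to the first factor of `Hl`. -/
def phi1 : l2 ≃L[ℂ] (Submodule.map (incl₁ : l2 →ₗ[ℂ] Hl) (⊤ : Submodule ℂ l2)) where
  toLinearEquiv :=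
    { toFun := fun a => ⟨incl₁ a, ⟨a, trivial, rfl⟩⟩
      map_add' := fun a b => by ext : 1; simp
      map_smul' := fun c a => by ext : 1; simp
      invFun := fun m => (m : Hl).fst
      left_inv := fun a => rfl
      right_inv := fun m => by
        ext : 1
        exact Hl_ext rfl (((mem_M_iff _).mp m.2).symm) }
  continuous_toFun := Continuous.subtype_mk incl₁.continuous _
  continuous_invFun := (continuous_fst.comp ((e : Hl →L[ℂ] l2 × l2).continuous.comp continuous_subtype_val))

/-- `l2` is equivalent to the second factor of `Hl`. -/
def phi2 : l2 ≃L[ℂ] (Submodule.map (incl₂ : l2 →ₗ[ℂ] Hl) (⊤ : Submodule ℂ l2)) where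
  toLinearEquiv :=
    { toFun := fun a => ⟨incl₂ a, ⟨a, trivial, rfl⟩⟩
      map_add' := fun a b => by ext : 1; simp
      map_smul' := fun c a => by ext : 1; simp
      invFun := fun m => (m : Hl).snd
      left_inv := fun a => rfl
      right_inv := fun m => by
        ext : 1
        exact Hl_ext (((mem_L_iff _).mp m.2).symm) rfl }
  continuous_toFun := Continuous.subtype_mk incl₂.continuous _
  continuous_invFun := (continuous_snd.comp ((e : Hl →L[ℂ] l2 × l2).continuous.comp continuous_subtype_val))

end Aux

/-- Let `W` be the weighted bilateral shift with weights `w n = 2^n` (`n ≤ 0`),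
`w n = 1/(n+1)` (`n > 0`), and `Ŵ = W ⊕ (W*)⁻¹` on `Hl`, which is `J`-unitary.
With `L = {0} ⊕ H₀` and `L⊥ = H₀ ⊕ {0}`:
(a) `Ŵ(L⊥) = L⊥`, the spectrum of `Ŵ|L⊥` lies in `{1 ≤ |z| ≤ 2}` with spectral radius `2`,
and yet `L⊥` is the closure of `S₀(Ŵ)` and also of `S(Ŵ)`;
(b) `Ŵ(L) = L`, the spectrum of `Ŵ|L` lies in `{|z| ≤ 1}`, and yet
`L ∩ closure(S(Ŵ)) = {0}`. -/
theorem stmt19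
    (w : ℤ → ℝ)
    (hw : ∀ n : ℤ, (n ≤ 0 → w n = (2 : ℝ) ^ n) ∧ (0 < n → w n = ((n : ℝ) + 1)⁻¹))
    (W : (l2 →L[ℂ] l2)ˣ)
    (hW : ∀ (f : l2) (n : ℤ),
      (W : l2 →L[ℂ] l2) f n = ((w n / w (n - 1) : ℝ) : ℂ) * f (n - 1))
    (What : Hl →L[ℂ] Hl)
    (hWhat : What =
      hatOp (W : l2 →L[ℂ] l2) (adjoint ((W⁻¹ : (l2 →L[ℂ] l2)ˣ) : l2 →L[ℂ] l2)))
    (L M : Submodule ℂ Hl)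
    (hL : L = Submodule.map (incl₂ : l2 →ₗ[ℂ] Hl) (⊤ : Submodule ℂ l2))
    (hM : M = Submodule.map (incl₁ : l2 →ₗ[ℂ] Hl) (⊤ : Submodule ℂ l2)) :
    ((adjoint What).comp (Jop.comp What) = Jop ∧
      What.comp (Jop.comp (adjoint What)) = Jop) ∧
    Lᗮ = M ∧
    (Submodule.map (What : Hl →ₗ[ℂ] Hl) M = M ∧
      (∃ hMinv : ∀ x ∈ M, What x ∈ M,
        (∀ z ∈ spectrum ℂ (restrictOp What M hMinv), 1 ≤ ‖z‖ ∧ ‖z‖ ≤ 2) ∧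
        spectralRadius ℂ (restrictOp What M hMinv) = 2) ∧
      (M : Set Hl) = closure (S0 What) ∧
      (M : Set Hl) = closure (Sbd What)) ∧
    (Submodule.map (What : Hl →ₗ[ℂ] Hl) L = L ∧
      (∃ hLinv : ∀ x ∈ L, What x ∈ L,
        ∀ z ∈ spectrum ℂ (restrictOp What L hLinv), ‖z‖ ≤ 1) ∧
      (L : Set Hl) ∩ closure (Sbd What) = {0}) := by
  subst hWhat hL hM
  set Wc : l2 →L[ℂ] l2 := (W : l2 →L[ℂ] l2) with hWc
  set Wi : l2 →L[ℂ] l2 := ((W⁻¹ : (l2 →L[ℂ] l2)ˣ) : l2 →L[ℂ] l2) with hWi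
  set V : l2 →L[ℂ] l2 := adjoint Wi with hV
  -- basic facts about the weights
  have hwpos : ∀ n, 0 < w n := ar_pos hw
  have hwne : ∀ n, w n ≠ 0 := fun n => (hwpos n).ne'
  -- composition identities
  have hWiWc : Wi.comp Wc = 1 := by
    ext f : 1
    rw [ContinuousLinearMap.comp_apply, ← ContinuousLinearMap.mul_apply, hWc, hWi,
      Units.inv_mul, ContinuousLinearMap.one_apply]
  have hWcWi : Wc.comp Wi = 1 := by
    ext f : 1
    rw [ContinuousLinearMap.comp_apply, ← ContinuousLinearMap.mul_apply, hWc, hWi,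
      Units.mul_inv, ContinuousLinearMap.one_apply]
  have hadj1 : (adjoint Wc).comp V = 1 := by
    rw [hV, ← adjoint_comp, hWiWc, ← star_eq_adjoint]
    exact star_one _
  have hadj2 : V.comp (adjoint Wc) = 1 := by
    rw [hV, ← adjoint_comp, hWcWi, ← star_eq_adjoint]
    exact star_one _
  -- coordinates of W⁻¹
  have hWinv : ∀ (f : l2) (n : ℤ), Wi f n = ((w n / w (n + 1) : ℝ) : ℂ) * f (n + 1) := by
    intro f n
    have h1 : Wc (Wi f) = f := by
      rw [← ContinuousLinearMap.comp_apply, hWcWi, ContinuousLinearMap.one_apply]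
    have h2 := coord_eq h1 (n + 1)
    rw [hWc, hW] at h2
    simp only [add_sub_cancel_right] at h2
    have hc : ((w (n+1) / w n : ℝ) : ℂ) ≠ 0 := by
      simp only [ne_eq, Complex.ofReal_eq_zero]
      exact div_ne_zero (hwne _) (hwne _)
    apply mul_left_cancel₀ hc
    rw [h2, ← mul_assoc, ← Complex.ofReal_mul, div_mul_div_comm,
      mul_comm (w (n+1)) (w n), mul_div_mul_left _ _ (hwne n), div_self (hwne (n+1))]
    simp
  -- operator norm bounds
  have hWc_pow_le : ∀ N : ℕ, ‖Wc ^ N‖ ≤ 2 ^ N := by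
    intro N
    apply opNorm_le_bound _ (by positivity)
    intro f
    apply l2_norm_le _ _ _ (by positivity) (N : ℤ)
    intro n
    rw [shift_pow_minus hwne (fun f n => hW f n), norm_mul, Complex.norm_real, Real.norm_eq_abs,
      abs_of_pos (div_pos (hwpos _) (hwpos _))]
    exact mul_le_mul_of_nonneg_right (ar_up hw N n) (norm_nonneg _)
  have hWc_le : ‖Wc‖ ≤ 2 := by
    have := hWc_pow_le 1
    simpa using this
  have hWi_pow_le : ∀ N : ℕ, ‖Wi ^ N‖ ≤ (N : ℝ) + 1 := by
    intro N
    have hc : (0:ℝ) ≤ (N:ℝ) + 1 := by positivity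
    apply opNorm_le_bound _ hc
    intro f
    apply l2_norm_le _ _ _ hc (-(N : ℤ))
    intro n
    rw [sub_neg_eq_add, shift_pow_plus hwne hWinv, norm_mul, Complex.norm_real, Real.norm_eq_abs,
      abs_of_pos (div_pos (hwpos _) (hwpos _))]
    exact mul_le_mul_of_nonneg_right (ar_down hw N n) (norm_nonneg _)
  have hVpow : ∀ N : ℕ, V ^ N = adjoint (Wi ^ N) := by
    intro N
    rw [hV, ← star_eq_adjoint, ← star_pow, star_eq_adjoint]
  have hV_pow_le : ∀ N : ℕ, ‖V ^ N‖ ≤ (N : ℝ) + 1 := by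
    intro N
    rw [hVpow, ContinuousLinearMap.adjoint.norm_map]
    exact hWi_pow_le N
  have hWc_pow_ge : ∀ N : ℕ, (2:ℝ) ^ N ≤ ‖Wc ^ N‖ := by
    intro N
    set x : l2 := lp.single 2 (-(N:ℤ)) 1 with hx
    have hxn : ‖x‖ = 1 := by rw [hx, l2_single_norm, norm_one]
    have hcoord : ((Wc ^ N) x) 0 = ((w 0 / w (0 - N) : ℝ) : ℂ) * x (0 - N) :=
      shift_pow_minus hwne (fun f n => hW f n) N x 0
    have hxc : x (0 - (N:ℤ)) = 1 := by
      rw [hx, l2_single_apply, if_pos (by omega)]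
    have hval : w 0 / w (0 - N) = 2 ^ N := by
      have h0 : w 0 = 1 := by
        rw [(hw 0).1 le_rfl]; norm_num
      have hN : w (0 - N) = 2 ^ (-(N:ℤ)) := by
        rw [(hw _).1 (by omega)]
        congr 1
        omega
      rw [h0, hN, zpow_neg, one_div, inv_inv, zpow_natCast]
    calc (2:ℝ) ^ N = ‖((Wc ^ N) x) 0‖ := by
          rw [hcoord, hxc, mul_one, Complex.norm_real, Real.norm_eq_abs, hval,
            abs_of_pos (by positivity)]
      _ ≤ ‖(Wc ^ N) x‖ := lp.norm_apply_le_norm (by norm_num) _ _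
      _ ≤ ‖Wc ^ N‖ * ‖x‖ := le_opNorm _ _
      _ = ‖Wc ^ N‖ := by rw [hxn, mul_one]
  -- J-unitarity
  have hadjWhat : adjoint (hatOp Wc V) = hatOp (adjoint Wc) Wi := by
    rw [← hat_adjoint]
    congr 1
    rw [hV, adjoint_adjoint]
  have goal1 : (adjoint (hatOp Wc V)).comp (Jop.comp (hatOp Wc V)) = Jop := by
    rw [hadjWhat]
    ext x : 1
    · apply Hl_ext
      · show (adjoint Wc) ((Jop (hatOp Wc V x)).fst) = (Jop x).fst
        rw [Jop_fst, Jop_fst, hat_snd]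
        rw [← ContinuousLinearMap.comp_apply, hadj1, ContinuousLinearMap.one_apply]
      · show Wi ((Jop (hatOp Wc V x)).snd) = (Jop x).snd
        rw [Jop_snd, Jop_snd, hat_fst]
        rw [← ContinuousLinearMap.comp_apply, hWiWc, ContinuousLinearMap.one_apply]
  have goal2 : (hatOp Wc V).comp (Jop.comp (adjoint (hatOp Wc V))) = Jop := by
    rw [hadjWhat]
    ext x : 1
    · apply Hl_ext
      · show Wc ((Jop (hatOp (adjoint Wc) Wi x)).fst) = (Jop x).fst
        rw [Jop_fst, Jop_fst, hat_snd]
        rw [← ContinuousLinearMap.comp_apply, hWcWi, ContinuousLinearMap.one_apply]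
      · show V ((Jop (hatOp (adjoint Wc) Wi x)).snd) = (Jop x).snd
        rw [Jop_snd, Jop_snd, hat_fst]
        rw [← ContinuousLinearMap.comp_apply, hadj2, ContinuousLinearMap.one_apply]
  -- orthogonal complement
  have goalOrth : (Submodule.map (incl₂ : l2 →ₗ[ℂ] Hl) (⊤ : Submodule ℂ l2))ᗮ
      = Submodule.map (incl₁ : l2 →ₗ[ℂ] Hl) (⊤ : Submodule ℂ l2) := by
    ext x
    rw [Submodule.mem_orthogonal, mem_M_iff]
    constructor
    · intro h
      have h2 := h (incl₂ x.snd) ⟨x.snd, trivial, rfl⟩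
      rw [Hl_inner, incl₂_fst, incl₂_snd, inner_zero_left, zero_add] at h2
      exact inner_self_eq_zero.mp h2
    · intro h u hu
      rw [Hl_inner, (mem_L_iff u).mp hu, h, inner_zero_left, inner_zero_right, add_zero]
  -- invariance of M
  have hMinv : ∀ x ∈ Submodule.map (incl₁ : l2 →ₗ[ℂ] Hl) (⊤ : Submodule ℂ l2),
      hatOp Wc V x ∈ Submodule.map (incl₁ : l2 →ₗ[ℂ] Hl) (⊤ : Submodule ℂ l2) := by
    intro x hx
    rw [mem_M_iff] at hx ⊢
    rw [hat_snd, hx, map_zero]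
  have goalMapM : Submodule.map (hatOp Wc V : Hl →ₗ[ℂ] Hl) (Submodule.map (incl₁ : l2 →ₗ[ℂ] Hl) (⊤ : Submodule ℂ l2))
      = Submodule.map (incl₁ : l2 →ₗ[ℂ] Hl) (⊤ : Submodule ℂ l2) := by
    apply le_antisymm
    · rintro y ⟨x, hx, rfl⟩
      exact hMinv x hx
    · intro y hy
      rw [mem_M_iff] at hy
      refine ⟨incl₁ (Wi y.fst), (mem_M_iff _).mpr rfl, ?_⟩
      apply Hl_ext
      · show Wc ((incl₁ (Wi y.fst)).fst) = y.fst
        rw [incl₁_fst, ← ContinuousLinearMap.comp_apply, hWcWi, ContinuousLinearMap.one_apply]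
      · show V ((incl₁ (Wi y.fst)).snd) = y.snd
        rw [incl₁_snd, map_zero, hy]
  -- invariance of L
  have hLinv : ∀ x ∈ Submodule.map (incl₂ : l2 →ₗ[ℂ] Hl) (⊤ : Submodule ℂ l2),
      hatOp Wc V x ∈ Submodule.map (incl₂ : l2 →ₗ[ℂ] Hl) (⊤ : Submodule ℂ l2) := by
    intro x hx
    rw [mem_L_iff] at hx ⊢
    rw [hat_fst, hx, map_zero]
  have goalMapL : Submodule.map (hatOp Wc V : Hl →ₗ[ℂ] Hl) (Submodule.map (incl₂ : l2 →ₗ[ℂ] Hl) (⊤ : Submodule ℂ l2))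
      = Submodule.map (incl₂ : l2 →ₗ[ℂ] Hl) (⊤ : Submodule ℂ l2) := by
    apply le_antisymm
    · rintro y ⟨x, hx, rfl⟩
      exact hLinv x hx
    · intro y hy
      rw [mem_L_iff] at hy
      refine ⟨incl₂ ((adjoint Wc) y.snd), (mem_L_iff _).mpr rfl, ?_⟩
      apply Hl_ext
      · show Wc ((incl₂ ((adjoint Wc) y.snd)).fst) = y.fst
        rw [incl₂_fst, map_zero, hy]
      · show V ((incl₂ ((adjoint Wc) y.snd)).snd) = y.snd
        rw [incl₂_snd, ← ContinuousLinearMap.comp_apply, hadj2, ContinuousLinearMap.one_apply]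
  -- spectrum of the restriction to M
  have hrestM : restrictOp (hatOp Wc V) (Submodule.map (incl₁ : l2 →ₗ[ℂ] Hl) (⊤ : Submodule ℂ l2)) hMinv
      = conjAlg phi1 Wc := by
    ext m : 1
    apply Subtype.ext
    apply Hl_ext
    · show (hatOp Wc V (m : Hl)).fst = (incl₁ (Wc ((m : Hl).fst))).fst
      rw [hat_fst, incl₁_fst]
    · show (hatOp Wc V (m : Hl)).snd = (incl₁ (Wc ((m : Hl).fst))).snd
      rw [hat_snd, incl₁_snd, (mem_M_iff _).mp m.2, map_zero]
  have hrestL : restrictOp (hatOp Wc V) (Submodule.map (incl₂ : l2 →ₗ[ℂ] Hl) (⊤ : Submodule ℂ l2)) hLinv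
      = conjAlg phi2 V := by
    ext m : 1
    apply Subtype.ext
    apply Hl_ext
    · show (hatOp Wc V (m : Hl)).fst = (incl₂ (V ((m : Hl).snd))).fst
      rw [hat_fst, incl₂_fst, (mem_L_iff _).mp m.2, map_zero]
    · show (hatOp Wc V (m : Hl)).snd = (incl₂ (V ((m : Hl).snd))).snd
      rw [hat_snd, incl₂_snd]
  have hspecM : spectrum ℂ (restrictOp (hatOp Wc V) (Submodule.map (incl₁ : l2 →ₗ[ℂ] Hl) (⊤ : Submodule ℂ l2))
      hMinv) = spectrum ℂ Wc := by
    rw [hrestM, conjAlg_spectrum]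
  have hspecL : spectrum ℂ (restrictOp (hatOp Wc V) (Submodule.map (incl₂ : l2 →ₗ[ℂ] Hl) (⊤ : Submodule ℂ l2))
      hLinv) = spectrum ℂ V := by
    rw [hrestL, conjAlg_spectrum]
  -- spectrum bounds
  have hsrWi : spectralRadius ℂ Wi ≤ 1 := sr_le_one Wi hWi_pow_le
  have hsrV : spectralRadius ℂ V ≤ 1 := sr_le_one V hV_pow_le
  have hspecWbounds : ∀ z ∈ spectrum ℂ Wc, 1 ≤ ‖z‖ ∧ ‖z‖ ≤ 2 := by
    intro z hz
    constructor
    · have hz0 : z ≠ 0 := by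
        intro h
        rw [h] at hz
        exact spectrum.zero_notMem ℂ W.isUnit hz
      have hinv : (z⁻¹ : ℂ) ∈ spectrum ℂ Wi := by
        have h' : ((Units.mk0 z hz0 : ℂˣ) : ℂ) ∈ spectrum ℂ (Wc : l2 →L[ℂ] l2) := hz
        exact spectrum.inv_mem_iff.mp h'
      have h1 : (‖(z⁻¹ : ℂ)‖₊ : ℝ≥0∞) ≤ spectralRadius ℂ Wi :=
        le_iSup₂ (f := fun k (_ : k ∈ spectrum ℂ Wi) => (‖k‖₊ : ℝ≥0∞)) z⁻¹ hinv
      have h2 : (‖(z⁻¹ : ℂ)‖₊ : ℝ≥0∞) ≤ 1 := h1.trans hsrWi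
      have h3 : ‖(z⁻¹ : ℂ)‖ ≤ 1 := by exact_mod_cast h2
      rw [norm_inv] at h3
      have hzpos : 0 < ‖z‖ := norm_pos_iff.mpr hz0
      nlinarith [inv_mul_cancel₀ hzpos.ne']
    · exact (spectrum.norm_le_norm_of_mem hz).trans hWc_le
  have hsrWc : spectralRadius ℂ Wc = 2 := sr_eq_two Wc hWc_le hWc_pow_ge
  -- bounded orbits lie in M
  have hat_pow_apply : ∀ (N : ℕ) (x : Hl),
      ((hatOp Wc V) ^ N) x = hatOp (Wc ^ N) (V ^ N) x := by
    intro N x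
    rw [hat_pow]
  have hSbd_sub_M : Sbd (hatOp Wc V) ⊆ (Submodule.map (incl₁ : l2 →ₗ[ℂ] Hl) (⊤ : Submodule ℂ l2) : Set Hl) := by
    rintro x ⟨C, hC0, hC⟩
    have hVb : ∀ N : ℕ, ‖(V ^ N) x.snd‖ ≤ C := by
      intro N
      have h1 : ‖((hatOp Wc V) ^ N) x‖ ^ 2 = ‖(Wc ^ N) x.fst‖ ^ 2 + ‖(V ^ N) x.snd‖ ^ 2 := by
        rw [hat_pow_apply, hat_norm_sq]
      have h2 := hC N
      nlinarith [norm_nonneg ((V ^ N) x.snd), norm_nonneg (((hatOp Wc V) ^ N) x),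
        sq_nonneg ‖(Wc ^ N) x.fst‖]
    have hx2 : x.snd = 0 := by
      apply lp.ext
      funext n
      rw [lp.coeFn_zero, Pi.zero_apply]
      by_contra hne
      have hpos : 0 < ‖x.snd n‖ := norm_pos_iff.mpr hne
      -- key inequality
      have key : ∀ N : ℕ, (w n / w (n + N)) * ‖x.snd n‖ ≤ C := by
        intro N
        have hidx : n + (N:ℤ) - (N:ℤ) = n := by ring
        have h1 : (Wi ^ N) (lp.single 2 (n + N) 1)
            = lp.single 2 n (((w n / w (n + N) : ℝ) : ℂ)) := by
          rw [pow_single_plus hwne hWinv N (n + N) 1, hidx, mul_one]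
        have h2 : (inner ℂ ((V ^ N) x.snd) (lp.single 2 (n + N) 1 : l2) : ℂ)
            = inner ℂ x.snd ((Wi ^ N) (lp.single 2 (n + N) 1)) := by
          rw [hVpow, adjoint_inner_left]
        have hs := lp.inner_single_right (𝕜 := ℂ) n (((w n / w (n + N) : ℝ) : ℂ)) x.snd
        have h3 : ‖(inner ℂ ((V ^ N) x.snd) (lp.single 2 (n + N) 1 : l2) : ℂ)‖
            = (w n / w (n + N)) * ‖x.snd n‖ := by
          rw [h2, h1, hs]
          simp only [RCLike.inner_apply]
          rw [norm_mul, RCLike.norm_conj, Complex.norm_real, Real.norm_eq_abs,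
            abs_of_pos (div_pos (hwpos _) (hwpos _))]
        have h4 : ‖(inner ℂ ((V ^ N) x.snd) (lp.single 2 (n + N) 1 : l2) : ℂ)‖
            ≤ ‖(V ^ N) x.snd‖ * ‖(lp.single 2 (n + N) 1 : l2)‖ := norm_inner_le_norm _ _
        rw [h3, l2_single_norm, norm_one, mul_one] at h4
        exact h4.trans (hVb N)
      -- choose N large enough for a contradiction
      obtain ⟨N, hN⟩ := exists_nat_gt (max (-(n:ℝ)) (C / (w n * ‖x.snd n‖) - (n:ℝ)))
      have hN1 : (-(n:ℝ)) < N := lt_of_le_of_lt (le_max_left _ _) hN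
      have hN2 : C / (w n * ‖x.snd n‖) - (n:ℝ) < N := lt_of_le_of_lt (le_max_right _ _) hN
      have hnN : 0 < n + (N:ℤ) := by exact_mod_cast (by push_cast; linarith : (0:ℝ) < ((n:ℝ) + (N:ℝ)))
      have hwnN : w (n + N) = (((n:ℝ) + (N:ℝ)) + 1)⁻¹ := by
        rw [(hw _).2 hnN]
        push_cast
        ring_nf
      have hcontra := key N
      rw [hwnN, div_eq_mul_inv, inv_inv] at hcontra
      have hwn := hwpos n
      have : C < w n * ((n:ℝ) + (N:ℝ) + 1) * ‖x.snd n‖ := by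
        have hq : C / (w n * ‖x.snd n‖) < (n:ℝ) + N := by linarith
        have hprod : 0 < w n * ‖x.snd n‖ := mul_pos hwn hpos
        rw [div_lt_iff₀ hprod] at hq
        nlinarith
      linarith
    exact (mem_M_iff x).mpr hx2
  -- S0 ⊆ Sbd
  have hS0_sub_Sbd : S0 (hatOp Wc V) ⊆ Sbd (hatOp Wc V) := by
    intro x hx
    obtain ⟨C, hC⟩ := hx.bddAbove_range
    refine ⟨max C 0, le_max_right _ _, fun N => ?_⟩
    exact le_trans (hC ⟨N, rfl⟩) (le_max_left _ _)
  -- M is closed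
  have hMclosed : IsClosed ((Submodule.map (incl₁ : l2 →ₗ[ℂ] Hl) (⊤ : Submodule ℂ l2) : Submodule ℂ Hl) :
      Set Hl) := by
    rw [← goalOrth]
    exact Submodule.isClosed_orthogonal _
  -- the singles generate S0
  have h_single_S0 : ∀ (k : ℤ) (c : ℂ),
      Tendsto (fun N : ℕ => ‖(Wc ^ N) (lp.single 2 k c)‖) atTop (𝓝 0) := by
    intro k c
    have heq : ∀ N : ℕ, ‖(Wc ^ N) (lp.single 2 k c)‖ = w (k + N) * ((w k)⁻¹ * ‖c‖) := by
      intro N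
      rw [pow_single_minus hwne (fun f n => hW f n), l2_single_norm, norm_mul,
        Complex.norm_real, Real.norm_eq_abs, abs_of_pos (div_pos (hwpos _) (hwpos _)), div_eq_mul_inv]
      ring
    have htend : Tendsto (fun N : ℕ => w (k + N)) atTop (𝓝 0) := by
      have hbase : Tendsto (fun N : ℕ => ((k:ℝ) + (N:ℝ) + 1)⁻¹) atTop (𝓝 0) := by
        apply tendsto_inv_atTop_zero.comp
        apply tendsto_atTop_add_const_right
        exact tendsto_atTop_add_const_left _ _ tendsto_natCast_atTop_atTop
      apply hbase.congr'
      filter_upwards [eventually_gt_atTop (Int.toNat (-k))] with N hN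
      have hkN : 0 < k + (N:ℤ) := by omega
      rw [(hw _).2 hkN]
      push_cast
      ring_nf
    have := (htend.mul_const ((w k)⁻¹ * ‖c‖))
    rw [zero_mul] at this
    exact this.congr (fun N => (heq N).symm)
  have hM_sub : (Submodule.map (incl₁ : l2 →ₗ[ℂ] Hl) (⊤ : Submodule ℂ l2) : Set Hl)
      ⊆ closure (S0 (hatOp Wc V)) := by
    intro x hx
    have hx2 : x.snd = 0 := (mem_M_iff x).mp hx
    have hsum := lp.hasSum_single (by norm_num : (2:ℝ≥0∞) ≠ ⊤) x.fst
    have htend : Tendsto (fun s : Finset ℤ => incl₁ (∑ k ∈ s, lp.single 2 k (x.fst k)))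
        atTop (𝓝 x) := by
      have h1 := (incl₁.continuous.tendsto x.fst).comp hsum
      have h2 : incl₁ x.fst = x := Hl_ext rfl hx2.symm
      rw [Function.comp_def] at h1
      simpa [map_sum, h2] using h1
    refine mem_closure_of_tendsto htend (Filter.Eventually.of_forall (fun s => ?_))
    -- each finite linear combination of singles is in S0
    show Tendsto (fun N : ℕ => ‖((hatOp Wc V) ^ N) (incl₁ (∑ k ∈ s, lp.single 2 k (x.fst k)))‖)
      atTop (𝓝 0)
    have hnorm : ∀ N : ℕ, ‖((hatOp Wc V) ^ N) (incl₁ (∑ k ∈ s, lp.single 2 k (x.fst k)))‖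
        = ‖(Wc ^ N) (∑ k ∈ s, lp.single 2 k (x.fst k))‖ := by
      intro N
      rw [hat_pow_apply, hat_norm_incl₁]
    have hbound : ∀ N : ℕ, ‖(Wc ^ N) (∑ k ∈ s, lp.single 2 k (x.fst k))‖
        ≤ ∑ k ∈ s, ‖(Wc ^ N) (lp.single 2 k (x.fst k))‖ := by
      intro N
      rw [map_sum]
      exact norm_sum_le _ _
    have hsumtend : Tendsto (fun N : ℕ => ∑ k ∈ s, ‖(Wc ^ N) (lp.single 2 k (x.fst k))‖)
        atTop (𝓝 0) := by
      have := tendsto_finset_sum s (fun k _ => h_single_S0 k (x.fst k))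
      simpa using this
    apply tendsto_of_tendsto_of_tendsto_of_le_of_le tendsto_const_nhds
      (hsumtend.congr (fun N => rfl))
      (fun N => norm_nonneg _)
      (fun N => by rw [hnorm]; exact hbound N)
  have hclosureS0 : (Submodule.map (incl₁ : l2 →ₗ[ℂ] Hl) (⊤ : Submodule ℂ l2) : Set Hl)
      = closure (S0 (hatOp Wc V)) :=
    Set.Subset.antisymm hM_sub
      (closure_minimal (Set.Subset.trans hS0_sub_Sbd hSbd_sub_M) hMclosed)
  have hclosureSbd : (Submodule.map (incl₁ : l2 →ₗ[ℂ] Hl) (⊤ : Submodule ℂ l2) : Set Hl)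
      = closure (Sbd (hatOp Wc V)) :=
    Set.Subset.antisymm
      (Set.Subset.trans hM_sub (closure_mono hS0_sub_Sbd))
      (closure_minimal hSbd_sub_M hMclosed)
  -- final assembly
  refine ⟨⟨goal1, goal2⟩, goalOrth, ⟨goalMapM, ⟨hMinv, ?_, ?_⟩, hclosureS0, hclosureSbd⟩,
    goalMapL, ⟨hLinv, ?_⟩, ?_⟩
  · intro z hz
    rw [hspecM] at hz
    exact hspecWbounds z hz
  · rw [hrestM, conjAlg_spectralRadius]
    exact hsrWc
  · intro z hz
    rw [hspecL] at hz
    have h1 : (‖z‖₊ : ℝ≥0∞) ≤ spectralRadius ℂ V :=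
      le_iSup₂ (f := fun k (_ : k ∈ spectrum ℂ V) => (‖k‖₊ : ℝ≥0∞)) z hz
    have h2 : (‖z‖₊ : ℝ≥0∞) ≤ 1 := h1.trans hsrV
    exact_mod_cast h2
  · apply Set.eq_singleton_iff_unique_mem.mpr
    constructor
    · constructor
      · exact Submodule.zero_mem _
      · apply subset_closure
        exact ⟨0, le_rfl, fun N => by rw [map_zero, norm_zero]⟩
    · rintro x ⟨hxL, hxcl⟩
      have hx2 : x ∈ (Submodule.map (incl₁ : l2 →ₗ[ℂ] Hl) (⊤ : Submodule ℂ l2) : Set Hl) :=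
        (closure_minimal hSbd_sub_M hMclosed) hxcl
      have h1 : x.fst = 0 := (mem_L_iff x).mp hxL
      have h2 : x.snd = 0 := (mem_M_iff x).mp hx2
      exact Hl_ext h1 h2
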